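/- arXiv:2004.14170 — 2 statements merged into one kernel-verified Lean document; each statement's English description precedes it below -/
import Mathlib

section
/- Let x_1,...,x_K and y_1,...,y_K be nonnegative real numbers. For any q ∈ {1,...,K} and any t ∈ {1,...,q}, the q-th smallest element of the multiset {x_k y_k : k ∈ [K]} is at least the product of the t-th smallest element of {x_k} and the (q-t+1)-th smallest element of {y_k}. -/
/-!
Let `a`, `b`, `c` be the `t`-th smallest `x`, the `(q-t+1)`-th smallest `y` and the `q`-th
smallest product. At least `K - (t-1)` indices have `a ≤ x k`, at least `K - (q-t)` have
`b ≤ y k`, and at least `q` have `x k * y k ≤ c`; these counts add up to more than `2K`, so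
some index `k` lies in all three sets, and then `a * b ≤ x k * y k ≤ c`.
-/

open Finset

namespace Tuple

variable {n : ℕ}

lemma card_sub_le_card_filter_sort_le {α : Type*} [LinearOrder α] (f : Fin n → α) (i : Fin n) :
    n - i ≤ #{k | f (sort f i) ≤ f k} :=
  calc n - i = #(Ici i) := (Fin.card_Ici i).symm
    _ ≤ _ := card_le_card_of_injOn (sort f)
      (fun _ hj ↦ by simpa using monotone_sort f (mem_Ici.mp hj)) (sort f).injective.injOn

lemma succ_le_card_filter_le_sort {α : Type*} [LinearOrder α] (f : Fin n → α) (i : Fin n) :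
    i + 1 ≤ #{k | f k ≤ f (sort f i)} :=
  calc i + 1 = #(Iic i) := (Fin.card_Iic i).symm
    _ ≤ _ := card_le_card_of_injOn (sort f)
      (fun _ hj ↦ by simpa using monotone_sort f (mem_Iic.mp hj)) (sort f).injective.injOn

lemma exists_sort_le_sort_le_le_sort {α β γ : Type*} [LinearOrder α] [LinearOrder β]
    [LinearOrder γ] (f : Fin n → α) (g : Fin n → β) (h : Fin n → γ) {i j l : Fin n}
    (hijl : (i : ℕ) + j ≤ l) :
    ∃ k, f (sort f i) ≤ f k ∧ g (sort g j) ≤ g k ∧ h k ≤ h (sort h l) := by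
  set A : Finset (Fin n) := {k | f (sort f i) ≤ f k}
  set B : Finset (Fin n) := {k | g (sort g j) ≤ g k}
  set C : Finset (Fin n) := {k | h k ≤ h (sort h l)}
  have hAB : n - (i + j) ≤ #(A ∩ B) := by
    have hA : n - i ≤ #A := card_sub_le_card_filter_sort_le f i
    have hB : n - j ≤ #B := card_sub_le_card_filter_sort_le g j
    have hunion : #(A ∪ B) ≤ n := by simpa using card_le_univ (A ∪ B)
    have := card_inter_add_card_union A B
    omega
  have hC : (l : ℕ) + 1 ≤ #C := succ_le_card_filter_le_sort h l
  have hl := l.isLt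
  obtain ⟨k, hk⟩ := inter_nonempty_of_card_lt_card_add_card (subset_univ (A ∩ B))
    (subset_univ C) (by simp only [card_univ, Fintype.card_fin]; omega)
  simp only [A, B, C, mem_inter, mem_filter, mem_univ, true_and] at hk
  exact ⟨k, hk.1.1, hk.1.2, hk.2⟩

end Tuple

/-- For nonnegative reals `x₁,…,x_K` and `y₁,…,y_K`, the `q`-th smallest element of
`{x_k * y_k}` is at least the product of the `t`-th smallest of `{x_k}` and the
`(q-t+1)`-th smallest of `{y_k}`, for all `1 ≤ t ≤ q ≤ K`. -/
theorem stmt_1 (K : ℕ) (x y : Fin K → ℝ)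
    (hx : ∀ k, 0 ≤ x k) (hy : ∀ k, 0 ≤ y k)
    (q t : ℕ) (ht : 1 ≤ t) (htq : t ≤ q) (hq : q ≤ K) :
    x (Tuple.sort x ⟨t - 1, by omega⟩) * y (Tuple.sort y ⟨q - t, by omega⟩) ≤
      (fun k => x k * y k) (Tuple.sort (fun k => x k * y k) ⟨q - 1, by omega⟩) := by
  obtain ⟨k, hxk, hyk, hk⟩ := Tuple.exists_sort_le_sort_le_le_sort x y (fun k => x k * y k)
    (i := ⟨t - 1, by omega⟩) (j := ⟨q - t, by omega⟩) (l := ⟨q - 1, by omega⟩)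
    (show t - 1 + (q - t) ≤ q - 1 by omega)
  exact (mul_le_mul hxk hyk (hy _) (hx _)).trans hk
end

section
/- Fix integers K ≥ 1, M ≥ 1, r with 1 ≤ r ≤ K, q with 1 ≤ q ≤ K, and a real μ ∈ (0,1]. Define τ_a^c(r,q) = M r μ (H_K − H_{K−q})/K and τ_l^c(r,q) = max_{t∈[q]} (H_K − H_{K−q+t−1}) · max(r−K+t, 0) · M μ / t. Suppose n_1, n_2 are integers with 0 ≤ n_1 < q/2, n_2 ≥ 1, r ≥ K − n_1, q ≤ K(1 − 1/n_2) + 1, and q is even. Then τ_a^c(r,q)/τ_l^c(r,q) ≤ (1+n_1)(1+n_2). -/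
/-!
Evaluate the lower bound at `t = q/2`. Since `r ≥ K - n₁` and `n₁ < t`, the factor `t / (r - K + t)`
is at most `1 + n₁`. The sum `H_K - H_{K-q}` splits into its first `t - 1` terms, each at most
`1/(K - q + 1)`, and its last `t + 1` terms, each at least `1/K`; the condition on `n₂` says exactly
`K ≤ n₂ (K - q + 1)`, so the first part is at most `n₂` times the second, and `r ≤ K` costs nothing.
-/

theorem harmonic_mono : Monotone harmonic :=
  monotone_nat_of_le_succ fun n => by
    rw [harmonic_succ]
    exact le_add_of_nonneg_right (by positivity)

theorem harmonic_add_sub_le (a d : ℕ) : harmonic (a + d) - harmonic a ≤ d / (a + 1) := by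
  induction d with
  | zero => simp
  | succ d ih =>
    rw [← add_assoc, harmonic_succ]
    have : ((a + d + 1 : ℕ) : ℚ)⁻¹ ≤ 1 / (a + 1) := by
      rw [inv_eq_one_div]; gcongr; push_cast; linarith [(d.cast_nonneg : (0 : ℚ) ≤ d)]
    push_cast at this ⊢
    rw [add_div]; linarith

theorem div_le_harmonic_add_sub (a d : ℕ) :
    (d : ℚ) / (a + d) ≤ harmonic (a + d) - harmonic a := by
  induction d with
  | zero => simp
  | succ d ih =>
    rw [← add_assoc, harmonic_succ]
    have : (d : ℚ) / (a + d + 1) ≤ d / (a + d) := by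
      rcases Nat.eq_zero_or_pos (a + d) with h | h
      · simp [show d = 0 by omega]
      · exact div_le_div_of_nonneg_left d.cast_nonneg (by exact_mod_cast h) (by linarith)
    push_cast at this ⊢
    rw [← add_assoc, add_div, ← one_div]; linarith

theorem harmonic_add_sub_le_mul (a d e n : ℕ) (hde : d ≤ e) (hn : a + d + e ≤ n * (a + 1)) :
    harmonic (a + d) - harmonic a ≤ n * (harmonic (a + d + e) - harmonic (a + d)) := by
  rcases Nat.eq_zero_or_pos (a + d + e) with h | h
  · obtain ⟨rfl, rfl, rfl⟩ : a = 0 ∧ d = 0 ∧ e = 0 := by omega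
    simp
  have hde' : (d : ℚ) ≤ e := by exact_mod_cast hde
  have hn' : ((a + d + e : ℕ) : ℚ) ≤ n * (a + 1) := by exact_mod_cast hn
  have hpos : (0 : ℚ) < (a + d + e : ℕ) := by exact_mod_cast h
  calc harmonic (a + d) - harmonic a ≤ d / (a + 1) := harmonic_add_sub_le a d
    _ ≤ n * (d / (a + d + e : ℕ)) := by
      rw [mul_div_assoc', div_le_div_iff₀ (by positivity) hpos]
      nlinarith [(d.cast_nonneg : (0 : ℚ) ≤ d)]
    _ ≤ n * (e / (a + d + e : ℕ)) := by gcongr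
    _ ≤ n * (harmonic (a + d + e) - harmonic (a + d)) := by
      gcongr; exact_mod_cast div_le_harmonic_add_sub (a + d) e

theorem harmonic_sub_harmonic_sub_two_mul_le {K t n : ℕ} (ht : 1 ≤ t) (htK : t + t ≤ K)
    (hn : K ≤ n * (K - (t + t) + 1)) :
    harmonic K - harmonic (K - (t + t)) ≤
      (1 + n) * (harmonic K - harmonic (K - (t + t) + t - 1)) := by
  have hsplit : K - (t + t) + (t - 1) + (t + 1) = K := by omega
  have h := harmonic_add_sub_le_mul (K - (t + t)) (t - 1) (t + 1) n (by omega) (by rwa [hsplit])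
  rw [hsplit, show K - (t + t) + (t - 1) = K - (t + t) + t - 1 by omega] at h
  linarith

theorem le_mul_sub_add_one_of_le_mul_one_sub_div {K q n : ℕ} (hqK : q ≤ K) (hn : 1 ≤ n)
    (h : (q : ℝ) ≤ K * (1 - 1 / n) + 1) : K ≤ n * (K - q + 1) := by
  have hK : (K : ℝ) / n ≤ (K - q : ℕ) + 1 := by
    rw [mul_sub, mul_one, mul_one_div] at h
    rw [Nat.cast_sub hqK]
    linarith
  rw [div_le_iff₀' (by exact_mod_cast hn)] at hK
  exact_mod_cast hK

theorem le_one_add_mul_of_sub_le {n t x : ℝ} (hn : 0 ≤ n) (ht : n + 1 ≤ t) (hx : t - n ≤ x) :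
    t ≤ (1 + n) * x := by
  nlinarith

theorem Finset.div_sup'_le_of_le_mul {ι : Type*} {s : Finset ι} (hs : s.Nonempty) {f : ι → ℝ}
    {i : ι} (hi : i ∈ s) {a c : ℝ} (hc : 0 ≤ c) (hfi : 0 ≤ f i) (h : a ≤ c * f i) :
    a / s.sup' hs f ≤ c :=
  div_le_of_le_mul₀ (hfi.trans (s.le_sup' f hi)) hc
    (h.trans (mul_le_mul_of_nonneg_left (s.le_sup' f hi) hc))

theorem stmt_4_general (K M r q : ℕ) (hr2 : r ≤ K)
    (hq1 : 1 ≤ q) (hq2 : q ≤ K) (μ : ℝ) (hμ0 : 0 < μ)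
    (H : ℕ → ℝ) (hH : ∀ n, H n = ∑ k ∈ Finset.range n, (1 : ℝ) / (k + 1))
    (n₁ n₂ : ℕ) (hn₁ : (n₁ : ℝ) < q / 2) (hn₂ : 1 ≤ n₂)
    (hrn : K - n₁ ≤ r) (hqn : (q : ℝ) ≤ K * (1 - 1 / n₂) + 1) (hqeven : Even q) :
    ((M : ℝ) * r * μ * (H K - H (K - q)) / K) /
      ((Finset.Icc 1 q).sup' (Finset.nonempty_Icc.mpr hq1)
        (fun t => (H K - H (K - q + t - 1)) * max ((r : ℝ) - K + t) 0 * M * μ / t)) ≤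
      (1 + (n₁ : ℝ)) * (1 + (n₂ : ℝ)) := by
  obtain ⟨t, rfl⟩ := hqeven
  obtain rfl : H = fun n => (harmonic n : ℝ) := funext fun n => by simp [hH, harmonic, one_div]
  have hn₁t : n₁ + 1 ≤ t := by exact_mod_cast (by push_cast at hn₁; linarith : (n₁ : ℝ) < t)
  have hK : (0 : ℝ) < K := by exact_mod_cast (show 0 < K by omega)
  have ht : (0 : ℝ) < t := by exact_mod_cast (show 0 < t by omega)
  have hr : (t : ℝ) ≤ (1 + n₁) * (r - K + t) := by
    refine le_one_add_mul_of_sub_le n₁.cast_nonneg (by exact_mod_cast hn₁t) ?_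
    have : (K : ℝ) ≤ r + n₁ := by exact_mod_cast (show K ≤ r + n₁ by omega)
    linarith
  have hrt : 0 < (r : ℝ) - K + t := by nlinarith
  have htail : (harmonic K : ℝ) - harmonic (K - (t + t)) ≤
      (1 + n₂) * ((harmonic K : ℝ) - harmonic (K - (t + t) + t - 1)) := by
    exact_mod_cast harmonic_sub_harmonic_sub_two_mul_le (by omega) hq2
      (le_mul_sub_add_one_of_le_mul_one_sub_div hq2 hn₂ hqn)
  have hS : (0 : ℝ) ≤ harmonic K - harmonic (K - (t + t) + t - 1) := by
    exact_mod_cast sub_nonneg.mpr (harmonic_mono (by omega))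
  refine Finset.div_sup'_le_of_le_mul _ (Finset.mem_Icc.mpr ⟨by omega, le_add_self⟩)
    (by positivity) ?_ ?_ <;> simp only [max_eq_left hrt.le]
  · exact div_nonneg (mul_nonneg (mul_nonneg (mul_nonneg hS hrt.le) M.cast_nonneg) hμ0.le) ht.le
  calc (M : ℝ) * r * μ * ((harmonic K : ℝ) - harmonic (K - (t + t))) / K
      = M * μ * ((harmonic K : ℝ) - harmonic (K - (t + t))) * (r / K) := by ring
    _ ≤ M * μ * ((1 + n₂) * ((harmonic K : ℝ) - harmonic (K - (t + t) + t - 1))) * 1 := by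
      gcongr
      rw [div_le_one hK]; exact_mod_cast hr2
    _ ≤ M * μ * ((1 + n₂) * ((harmonic K : ℝ) - harmonic (K - (t + t) + t - 1))) *
        ((1 + n₁) * (r - K + t) / t) := by
      gcongr
      rwa [le_div_iff₀ ht, one_mul]
    _ = _ := by ring

/-- Multiplicative gap between the achievable NCT `τ_a^c = M r μ (H_K - H_{K-q})/K`
and the lower bound `τ_l^c = max_{t∈[q]} (H_K - H_{K-q+t-1})·(r-K+t)⁺·Mμ/t`:
if `r ≥ K - n₁`, `q ≤ K(1 - 1/n₂) + 1`, `0 ≤ n₁ < q/2`, `n₂ ≥ 1` and `q` is even,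
then `τ_a^c/τ_l^c ≤ (1+n₁)(1+n₂)`. -/
theorem stmt_4 (K M r q : ℕ) (hK : 1 ≤ K) (hM : 1 ≤ M) (hr1 : 1 ≤ r) (hr2 : r ≤ K)
    (hq1 : 1 ≤ q) (hq2 : q ≤ K) (μ : ℝ) (hμ0 : 0 < μ) (hμ1 : μ ≤ 1)
    (H : ℕ → ℝ) (hH : ∀ n, H n = ∑ k ∈ Finset.range n, (1 : ℝ) / (k + 1))
    (n₁ n₂ : ℕ) (hn₁ : (n₁ : ℝ) < q / 2) (hn₂ : 1 ≤ n₂)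
    (hrn : K - n₁ ≤ r) (hqn : (q : ℝ) ≤ K * (1 - 1 / n₂) + 1) (hqeven : Even q) :
    ((M : ℝ) * r * μ * (H K - H (K - q)) / K) /
      ((Finset.Icc 1 q).sup' (Finset.nonempty_Icc.mpr hq1)
        (fun t => (H K - H (K - q + t - 1)) * max ((r : ℝ) - K + t) 0 * M * μ / t)) ≤
      (1 + (n₁ : ℝ)) * (1 + (n₂ : ℝ)) :=
  stmt_4_general K M r q hr2 hq1 hq2 μ hμ0 H hH n₁ n₂ hn₁ hn₂ hrn hqn hqeven
end
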